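/- Let N = p·q where p, q are natural numbers with 1 ≤ p ≤ q, and let B be a real number with q − p ≤ B. Then the integer x = p + q satisfies 2√N ≤ x ≤ 2√N + B²/(4√N), and x² − 4N = (q − p)² is a perfect square. -/

import Mathlib

/-!
The lower bound is AM–GM, `2√(pq) ≤ p + q`. For the upper bound put `x = p + q`, `t = 2√N`;
then `x² - t² = (q - p)² ≤ B²`, and `x - t ≤ (x² - t²) / (2t)` for every `t > 0`, the
difference of the two sides being `(x - t)² / (2t)`.
-/

lemma Real.two_mul_sqrt_mul_le_add {a b : ℝ} (hab : 0 ≤ a + b) : 2 * √(a * b) ≤ a + b := by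
  have h := Real.sqrt_le_sqrt (four_mul_le_sq_add a b)
  rwa [mul_assoc, Real.sqrt_mul zero_le_four, Real.sqrt_sq hab,
    show (4 : ℝ) = 2 ^ 2 by norm_num, Real.sqrt_sq zero_le_two] at h

lemma sub_le_sq_sub_sq_div {x t : ℝ} (ht : 0 < t) : x - t ≤ (x ^ 2 - t ^ 2) / (2 * t) := by
  rw [le_div_iff₀ (by positivity)]
  nlinarith [sq_nonneg (x - t)]

lemma Nat.add_sq_sub_four_mul {p q : ℕ} (hpq : p ≤ q) :
    (p + q) ^ 2 - 4 * (p * q) = (q - p) ^ 2 := by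
  obtain ⟨d, rfl⟩ := Nat.exists_eq_add_of_le hpq
  rw [Nat.add_sub_cancel_left]
  exact Nat.sub_eq_of_eq_add (by ring)

/-- Let `N = p·q` with `1 ≤ p ≤ q` natural numbers, and let `B` be a real number with
`q - p ≤ B`. Then `x = p + q` satisfies `2√N ≤ x ≤ 2√N + B²/(4√N)`, and `x² - 4N = (q - p)²`
is a perfect square. -/
theorem fermat_search_interval (N p q : ℕ) (hp : 1 ≤ p) (hpq : p ≤ q) (hN : N = p * q)
    (B : ℝ) (hB : (q : ℝ) - (p : ℝ) ≤ B) :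
    2 * Real.sqrt N ≤ ((p + q : ℕ) : ℝ) ∧
    ((p + q : ℕ) : ℝ) ≤ 2 * Real.sqrt N + B ^ 2 / (4 * Real.sqrt N) ∧
    (p + q) ^ 2 - 4 * N = (q - p) ^ 2 ∧
    ∃ y : ℕ, (p + q) ^ 2 - 4 * N = y ^ 2 := by
  have hsq : (p + q) ^ 2 - 4 * N = (q - p) ^ 2 := hN ▸ Nat.add_sq_sub_four_mul hpq
  have hNR : (N : ℝ) = p * q := by rw [hN, Nat.cast_mul]
  have hs : 0 < √(N : ℝ) :=
    Real.sqrt_pos.2 <| hNR ▸ mul_pos (by exact_mod_cast hp) (by exact_mod_cast hp.trans hpq)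
  set x : ℝ := ((p + q : ℕ) : ℝ) with hx
  set t : ℝ := 2 * √(N : ℝ) with ht
  have hgap : x ^ 2 - t ^ 2 ≤ B ^ 2 := by
    have hqp : (0 : ℝ) ≤ q - p := sub_nonneg.2 (Nat.cast_le.2 hpq)
    rw [hx, ht, mul_pow, Real.sq_sqrt (Nat.cast_nonneg N), hNR, Nat.cast_add]
    nlinarith [pow_le_pow_left₀ hqp hB 2]
  refine ⟨?_, ?_, hsq, ⟨q - p, hsq⟩⟩
  · rw [hx, ht, hNR, Nat.cast_add]
    exact Real.two_mul_sqrt_mul_le_add (by positivity)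
  · calc x ≤ t + (x ^ 2 - t ^ 2) / (2 * t) := by
          linarith [sub_le_sq_sub_sq_div (x := x) (by positivity : 0 < t)]
      _ ≤ t + B ^ 2 / (4 * √(N : ℝ)) := by
          rw [ht, ← mul_assoc, show (2 : ℝ) * 2 = 4 by norm_num]
          gcongr
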